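/- Let (Q,+) be an NK-loop and let f be an automorphism of (Q,+) such that both f and f⁻¹ satisfy condition (F). Define h, p : Q → Q by h(x) = -x + f(x) and p(x) = -x + f⁻¹(x) for all x ∈ Q. Then h and p are special endomorphisms of (Q,+), h∘p = p∘h, and h + p + h∘p = 0, where addition of endomorphisms is pointwise and 0 is the zero endomorphism. -/
import Mathlib


/- Preamble: NK-loops, written additively.
   A loop is a set with `+`, a neutral element `0`, and unique left/right
   solvability.  An NK-loop is a loop in which every element decomposes as
   `x = u + v = v + u` with `u` in the nucleus and `v` in the Moufang center.
   Every NK-loop is a diassociative Moufang loop, so every element has a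
   (uniquely determined) two-sided inverse `-x`, which we include in the
   structure. -/

universe u

section Preamble
variable {Q : Type u}

/-- `a` belongs to the nucleus `N(Q,+)`. -/
def inNucleus [Add Q] (a : Q) : Prop :=
  ∀ x y : Q, (a + x) + y = a + (x + y) ∧ (x + a) + y = x + (a + y) ∧
    (x + y) + a = x + (y + a)

/-- `a` belongs to the Moufang center `K(Q,+)`. -/
def inMoufangCenter [Add Q] (a : Q) : Prop :=
  ∀ x y : Q, (a + a) + (x + y) = (a + x) + (a + y)

/-- `a` belongs to the center `Z(Q,+) = N(Q,+) ∩ K(Q,+)`. -/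
def inCenter [Add Q] (a : Q) : Prop := inNucleus a ∧ inMoufangCenter a

/-- An NK-loop `(Q,+)`: a loop in which every element decomposes as a sum
    `x = u + v = v + u` with `u ∈ N(Q,+)` and `v ∈ K(Q,+)`. -/
class NKLoop (Q : Type u) extends Add Q, Zero Q, Neg Q where
  zero_add : ∀ x : Q, 0 + x = x
  add_zero : ∀ x : Q, x + 0 = x
  exu_left : ∀ a b : Q, ∃! x : Q, a + x = b
  exu_right : ∀ a b : Q, ∃! y : Q, y + a = b
  neg_add_cancel : ∀ x : Q, -x + x = 0
  add_neg_cancel : ∀ x : Q, x + -x = 0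
  nk_decomp : ∀ x : Q, ∃ u v : Q, inNucleus u ∧ inMoufangCenter v ∧
      x = u + v ∧ x = v + u

variable [Add Q] [Zero Q] [Neg Q]

/-- Natural multiple `n • x`. -/
def nsmulL : ℕ → Q → Q
  | 0, _ => 0
  | n + 1, x => x + nsmulL n x

/-- Integer multiple `m • x` (unambiguous by diassociativity). -/
def zsmulL : ℤ → Q → Q
  | Int.ofNat n, x => nsmulL n x
  | Int.negSucc n, x => -(nsmulL (n + 1) x)

/-- `f` is an endomorphism of `(Q,+)`. -/
def IsEndo (f : Q → Q) : Prop := ∀ x y : Q, f (x + y) = f x + f y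

/-- `a` belongs to the center of the (commutative) subloop `(K(Q,+),+)`:
    `a ∈ K(Q,+)` and `a` satisfies the nucleus conditions relative to
    elements of `K(Q,+)`. -/
def inCenterOfK (a : Q) : Prop :=
  inMoufangCenter a ∧ ∀ x y : Q, inMoufangCenter x → inMoufangCenter y →
    (a + x) + y = a + (x + y) ∧ (x + a) + y = x + (a + y) ∧
      (x + y) + a = x + (y + a)

/-- `f` is a special endomorphism of the NK-loop `(Q,+)`:
    `f(Q) ⊆ K(Q,+)`, the restriction of `f` to `K(Q,+)` is a quasicentral
    endomorphism of the (commutative) loop `(K(Q,+),+)`, and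
    `f(N(Q,+)) ⊆ N(Q,+)`. -/
def IsSpecial (f : Q → Q) : Prop :=
  IsEndo f ∧ (∀ x : Q, inMoufangCenter (f x)) ∧
  (∃ m : ℤ, ∀ x : Q, inMoufangCenter x → inCenterOfK (zsmulL m x + f x)) ∧
  (∀ x : Q, inNucleus x → inNucleus (f x))

/-- `f` satisfies condition (F): `-x + f(x) ∈ K(Q,+)` and
    `x + f(x) ∈ N(Q,+)` for all `x`. -/
def SatisfiesF (f : Q → Q) : Prop :=
  ∀ x : Q, inMoufangCenter (-x + f x) ∧ inNucleus (x + f x)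

end Preamble

/- STATEMENT 12: Lemma 3.5(1),(2).  Let `f` be an automorphism of an NK-loop
   such that `f` and `f⁻¹` satisfy condition (F), and set
   `h(x) = -x + f(x)`, `p(x) = -x + f⁻¹(x)`.  Then `h` and `p` are special
   endomorphisms, `h ∘ p = p ∘ h`, and `h + p + h∘p = 0`. -/
namespace NKAux

variable {Q : Type u} [NKLoop Q]

lemma zadd (x : Q) : 0 + x = x := NKLoop.zero_add x
lemma addz (x : Q) : x + 0 = x := NKLoop.add_zero x
lemma negadd (x : Q) : -x + x = 0 := NKLoop.neg_add_cancel x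
lemma addneg (x : Q) : x + -x = 0 := NKLoop.add_neg_cancel x

lemma lcancel {a x y : Q} (h : a + x = a + y) : x = y := by
  obtain ⟨z, _, hu⟩ := NKLoop.exu_left a (a + y)
  exact (hu x h).trans (hu y rfl).symm

lemma rcancel {a x y : Q} (h : x + a = y + a) : x = y := by
  obtain ⟨z, _, hu⟩ := NKLoop.exu_right a (y + a)
  exact (hu x h).trans (hu y rfl).symm

lemma neg_unique {x y : Q} (h : x + y = 0) : y = -x :=
  lcancel (h.trans (addneg x).symm)

/-! ### Moufang center basics -/

lemma K_alt {a : Q} (ha : inMoufangCenter a) (y : Q) : a + (a + y) = (a + a) + y := by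
  have h := ha 0 y
  rw [zadd, addz] at h
  exact h.symm

lemma K_flex {a : Q} (ha : inMoufangCenter a) (x : Q) : (a + x) + a = (a + a) + x := by
  have h := ha x 0
  rw [addz, addz] at h
  exact h.symm

lemma K_lip0 {a : Q} (ha : inMoufangCenter a) (y : Q) : (a + a) + (-a + y) = a + y := by
  have h := ha (-a) y
  rw [addneg, zadd] at h
  exact h

lemma K_lip {a : Q} (ha : inMoufangCenter a) (y : Q) : a + (-a + y) = y := by
  refine lcancel (a := a) ?_
  rw [K_alt ha, K_lip0 ha]

lemma K_comm {a : Q} (ha : inMoufangCenter a) (t : Q) : a + t = t + a := by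
  have h5 : a + (a + (-a + t)) = (a + (-a + t)) + a := by
    rw [K_alt ha, K_flex ha]
  rwa [K_lip ha] at h5

lemma K_ilip {a : Q} (ha : inMoufangCenter a) (t : Q) : -a + (a + t) = t := by
  refine lcancel (a := a) ?_
  rw [K_lip ha]

lemma K_negcomm {a : Q} (ha : inMoufangCenter a) (y : Q) : -a + y = y + -a := by
  have h1 := K_lip0 ha y
  have h2 := ha y (-a)
  rw [addneg, addz] at h2
  exact lcancel (h1.trans h2.symm)

lemma K_neg2 {a : Q} (ha : inMoufangCenter a) : -a + -a = -(a + a) := by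
  refine neg_unique ?_
  have h := K_lip0 ha (-a)
  rw [addneg] at h
  exact h

/-! ### Nucleus basics -/

lemma N1 {n : Q} (hn : inNucleus n) (x y : Q) : (n + x) + y = n + (x + y) := (hn x y).1
lemma N2 {n : Q} (hn : inNucleus n) (x y : Q) : (x + n) + y = x + (n + y) := (hn x y).2.1
lemma N3 {n : Q} (hn : inNucleus n) (x y : Q) : (x + y) + n = x + (y + n) := (hn x y).2.2

lemma Nadd {a b : Q} (ha : inNucleus a) (hb : inNucleus b) : inNucleus (a + b) := by
  intro x y
  refine ⟨?_, ?_, ?_⟩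
  · calc ((a + b) + x) + y = (a + (b + x)) + y := by rw [N1 ha]
      _ = a + ((b + x) + y) := N1 ha _ _
      _ = a + (b + (x + y)) := by rw [N1 hb]
      _ = (a + b) + (x + y) := (N1 ha _ _).symm
  · calc (x + (a + b)) + y = ((x + a) + b) + y := by rw [N2 ha]
      _ = (x + a) + (b + y) := N2 hb _ _
      _ = x + (a + (b + y)) := N2 ha _ _
      _ = x + ((a + b) + y) := by rw [N1 ha]
  · calc (x + y) + (a + b) = ((x + y) + a) + b := by rw [N2 ha]
      _ = (x + (y + a)) + b := by rw [N3 ha]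
      _ = x + ((y + a) + b) := N3 hb _ _
      _ = x + (y + (a + b)) := by rw [N2 ha]

lemma Nneg {a : Q} (ha : inNucleus a) : inNucleus (-a) := by
  have r1 : ∀ y : Q, (y + -a) + a = y := fun y => by rw [N3 ha, negadd, addz]
  intro x y
  refine ⟨?_, ?_, ?_⟩
  · refine lcancel (a := a) ?_
    calc a + ((-a + x) + y) = (a + (-a + x)) + y := (N1 ha _ _).symm
      _ = ((a + -a) + x) + y := by rw [← N1 ha]
      _ = x + y := by rw [addneg, zadd]
      _ = (a + -a) + (x + y) := by rw [addneg, zadd]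
      _ = a + (-a + (x + y)) := N1 ha _ _
  · calc (x + -a) + y = (x + -a) + (a + (-a + y)) := by rw [← N1 ha, addneg, zadd]
      _ = ((x + -a) + a) + (-a + y) := (N2 ha _ _).symm
      _ = x + (-a + y) := by rw [r1 x]
  · calc (x + y) + -a = (x + ((y + -a) + a)) + -a := by rw [r1 y]
      _ = ((x + (y + -a)) + a) + -a := by rw [(N3 ha x (y + -a)).symm]
      _ = (x + (y + -a)) + (a + -a) := N2 ha _ _
      _ = x + (y + -a) := by rw [addneg, addz]

/-! ### central elements and closure of K -/

lemma NCK {n : Q} (hn : inNucleus n) (hc : ∀ t : Q, n + t = t + n) : inMoufangCenter n := by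
  intro x y
  calc (n + n) + (x + y) = n + (n + (x + y)) := N1 hn _ _
    _ = n + ((n + x) + y) := by rw [N1 hn]
    _ = n + ((x + n) + y) := by rw [hc x]
    _ = n + (x + (n + y)) := by rw [N2 hn]
    _ = (n + x) + (n + y) := (N1 hn _ _).symm

lemma ZKK {z v : Q} (hzn : inNucleus z) (hzc : ∀ t : Q, z + t = t + z)
    (hv : inMoufangCenter v) : inMoufangCenter (z + v) := by
  intro x y
  have hzz : inNucleus (z + z) := Nadd hzn hzn
  have e0 : (z + v) + (z + v) = (z + z) + (v + v) := by
    calc (z + v) + (z + v) = z + (v + (z + v)) := N1 hzn _ _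
      _ = z + (v + (v + z)) := by rw [hzc v]
      _ = z + ((v + v) + z) := by rw [K_alt hv]
      _ = z + (z + (v + v)) := by rw [← hzc (v + v)]
      _ = (z + z) + (v + v) := (N1 hzn _ _).symm
  have e2 : (z + (v + x)) + (z + (v + y)) = (z + z) + ((v + x) + (v + y)) := by
    calc (z + (v + x)) + (z + (v + y)) = z + ((v + x) + (z + (v + y))) := N1 hzn _ _
      _ = z + (((v + x) + z) + (v + y)) := by rw [(N2 hzn (v + x) (v + y)).symm]
      _ = z + ((z + (v + x)) + (v + y)) := by rw [← hzc (v + x)]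
      _ = z + (z + ((v + x) + (v + y))) := by rw [N1 hzn (v + x) (v + y)]
      _ = (z + z) + ((v + x) + (v + y)) := (N1 hzn _ _).symm
  calc ((z + v) + (z + v)) + (x + y) = ((z + z) + (v + v)) + (x + y) := by rw [e0]
    _ = (z + z) + ((v + v) + (x + y)) := N1 hzz _ _
    _ = (z + z) + ((v + x) + (v + y)) := by rw [hv x y]
    _ = (z + (v + x)) + (z + (v + y)) := e2.symm
    _ = ((z + v) + x) + ((z + v) + y) := by rw [N1 hzn v x, N1 hzn v y]

lemma central_K {c : Q} (hc : ∀ t : Q, c + t = t + c) : inMoufangCenter c := by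
  obtain ⟨u, v, hu, hv, h1, h2⟩ := NKLoop.nk_decomp c
  have huc : ∀ t : Q, u + t = t + u := by
    intro t
    have hs : v + (-v + t) = t := K_lip hv t
    calc u + t = u + (v + (-v + t)) := by rw [hs]
      _ = (u + v) + (-v + t) := (N1 hu _ _).symm
      _ = c + (-v + t) := by rw [← h1]
      _ = (-v + t) + c := hc _
      _ = (-v + t) + (v + u) := by rw [← h2]
      _ = ((-v + t) + v) + u := (N3 hu _ _).symm
      _ = (v + (-v + t)) + u := by rw [← K_comm hv (-v + t)]
      _ = t + u := by rw [hs]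
  rw [h1]
  exact ZKK hu huc hv

lemma Kadd {a b : Q} (ha : inMoufangCenter a) (hb : inMoufangCenter b) :
    inMoufangCenter (a + b) := by
  refine central_K ?_
  intro t
  have hs : a + (-a + t) = t := K_lip ha t
  calc (a + b) + t = (a + b) + (a + (-a + t)) := by rw [hs]
    _ = (a + a) + (b + (-a + t)) := (ha b (-a + t)).symm
    _ = (a + a) + ((-a + t) + b) := by rw [K_comm hb (-a + t)]
    _ = (a + (-a + t)) + (a + b) := ha (-a + t) b
    _ = t + (a + b) := by rw [hs]

lemma K_negK {a : Q} (ha : inMoufangCenter a) : inMoufangCenter (-a) :=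
  central_K (fun t => K_negcomm ha t)

lemma K_neg_add {a b : Q} (ha : inMoufangCenter a) (hb : inMoufangCenter b) :
    -(a + b) = -a + -b := by
  refine (neg_unique ?_).symm
  calc (a + b) + (-a + -b) = (a + b) + (a + (-a + (-a + -b))) := by rw [K_lip ha]
    _ = (a + a) + (b + (-a + (-a + -b))) := (ha _ _).symm
    _ = (a + a) + (b + ((-a + -a) + -b)) := by rw [K_alt (K_negK ha)]
    _ = (a + a) + (b + (-(a + a) + -b)) := by rw [K_neg2 ha]
    _ = (a + a) + (b + (-b + -(a + a))) := by rw [K_negcomm (Kadd ha ha) (-b)]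
    _ = (a + a) + -(a + a) := by rw [K_lip hb]
    _ = 0 := addneg _

/-! ### decomposition consequences -/

lemma neg_decomp {x u v : Q} (hu : inNucleus u) (hv : inMoufangCenter v) (h2 : x = v + u) :
    -x = -u + -v := by
  refine (neg_unique ?_).symm
  rw [h2]
  calc (v + u) + (-u + -v) = v + (u + (-u + -v)) := N2 hu _ _
    _ = v + ((u + -u) + -v) := by rw [← N1 hu]
    _ = v + -v := by rw [addneg, zadd]
    _ = 0 := addneg v

lemma glip (x z : Q) : x + (-x + z) = z := by
  obtain ⟨u, v, hu, hv, h1, h2⟩ := NKLoop.nk_decomp x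
  rw [neg_decomp hu hv h2, h2]
  calc (v + u) + ((-u + -v) + z) = (v + u) + (-u + (-v + z)) := by rw [N1 (Nneg hu)]
    _ = v + (u + (-u + (-v + z))) := N2 hu _ _
    _ = v + ((u + -u) + (-v + z)) := by rw [← N1 hu]
    _ = v + (-v + z) := by rw [addneg, zadd]
    _ = z := K_lip hv z

lemma gilip (x z : Q) : -x + (x + z) = z := by
  refine lcancel (a := x) ?_
  rw [glip]

end NKAux

namespace NKAux

variable {Q : Type u} [NKLoop Q]

/-! ### the map `x ↦ -x + f x` -/

lemma fN {f : Q → Q} (hFN : ∀ x : Q, inNucleus (x + f x)) {u : Q} (hu : inNucleus u) :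
    inNucleus (f u) := by
  have e : f u = -u + (u + f u) := (gilip u (f u)).symm
  rw [e]
  exact Nadd (Nneg hu) (hFN u)

lemma fK {f : Q → Q} (hFK : ∀ x : Q, inMoufangCenter (-x + f x)) {v : Q}
    (hv : inMoufangCenter v) : inMoufangCenter (f v) := by
  have e : f v = v + (-v + f v) := (glip v (f v)).symm
  rw [e]
  exact Kadd hv (hFK v)

lemma hmap_decomp {f : Q → Q} (hf : IsEndo f) (hFN : ∀ x : Q, inNucleus (x + f x))
    {x u v : Q} (hu : inNucleus u) (hv : inMoufangCenter v)
    (h1 : x = u + v) (h2 : x = v + u) :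
    -x + f x = (-u + f u) + (-v + f v) := by
  have hfuN : inNucleus (f u) := fN hFN hu
  rw [neg_decomp hu hv h2, h1, hf u v]
  calc (-u + -v) + (f u + f v) = -u + (-v + (f u + f v)) := N1 (Nneg hu) _ _
    _ = -u + ((f u + f v) + -v) := by rw [K_negcomm hv]
    _ = -u + (f u + (f v + -v)) := by rw [N1 hfuN]
    _ = -u + (f u + (-v + f v)) := by rw [← K_negcomm hv (f v)]
    _ = (-u + f u) + (-v + f v) := (N1 (Nneg hu) _ _).symm

lemma hmap_add_N {f : Q → Q} (hf : IsEndo f)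
    (hFK : ∀ x : Q, inMoufangCenter (-x + f x)) (hFN : ∀ x : Q, inNucleus (x + f x))
    {u u' : Q} (hu : inNucleus u) (hu' : inNucleus u') :
    -(u + u') + f (u + u') = (-u + f u) + (-u' + f u') := by
  have hW_K : inMoufangCenter (-u + f u) := hFK u
  have hW_N : inNucleus (-u + f u) := Nadd (Nneg hu) (fN hFN hu)
  have hnu : -(u + u') = -u' + -u := by
    refine (neg_unique ?_).symm
    calc (u + u') + (-u' + -u) = u + (u' + (-u' + -u)) := N1 hu _ _
      _ = u + ((u' + -u') + -u) := by rw [← N1 hu']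
      _ = u + -u := by rw [addneg, zadd]
      _ = 0 := addneg u
  rw [hnu, hf u u']
  calc (-u' + -u) + (f u + f u') = -u' + (-u + (f u + f u')) := N1 (Nneg hu') _ _
    _ = -u' + ((-u + f u) + f u') := by rw [← N1 (Nneg hu)]
    _ = (-u' + (-u + f u)) + f u' := (N2 hW_N _ _).symm
    _ = ((-u + f u) + -u') + f u' := by rw [← K_comm hW_K (-u')]
    _ = (-u + f u) + (-u' + f u') := N1 hW_N _ _

lemma zmove {za zb : Q} (hzaN : inNucleus za) (hzac : ∀ t : Q, za + t = t + za)
    (hzbN : inNucleus zb) (X Y : Q) :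
    (X + za) + (Y + zb) = (X + Y) + (za + zb) := by
  calc (X + za) + (Y + zb) = ((X + za) + Y) + zb := (N3 hzbN _ _).symm
    _ = (X + (za + Y)) + zb := by rw [N2 hzaN]
    _ = (X + (Y + za)) + zb := by rw [hzac Y]
    _ = ((X + Y) + za) + zb := by rw [← N3 hzaN]
    _ = (X + Y) + (za + zb) := N3 hzbN _ _

lemma K_endo_core {a b za zb : Q}
    (ha : inMoufangCenter a) (hb : inMoufangCenter b)
    (hzaN : inNucleus za) (hzbN : inNucleus zb) (hzaK : inMoufangCenter za) :
    -(a + b) + ((-a + za) + (-b + zb)) = (-a + (-a + za)) + (-b + (-b + zb)) := by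
  have hzac : ∀ t : Q, za + t = t + za := K_comm hzaK
  have m1 : (-a + za) + (-b + zb) = (-a + -b) + (za + zb) := zmove hzaN hzac hzbN _ _
  have m2 : (-(a + a) + za) + (-(b + b) + zb) = (-(a + a) + -(b + b)) + (za + zb) :=
    zmove hzaN hzac hzbN _ _
  have e_a : -a + (-a + za) = -(a + a) + za := by rw [K_alt (K_negK ha), K_neg2 ha]
  have e_b : -b + (-b + zb) = -(b + b) + zb := by rw [K_alt (K_negK hb), K_neg2 hb]
  calc -(a + b) + ((-a + za) + (-b + zb))
      = -(a + b) + ((-a + -b) + (za + zb)) := by rw [m1]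
    _ = -(a + b) + (-(a + b) + (za + zb)) := by rw [← K_neg_add ha hb]
    _ = (-(a + b) + -(a + b)) + (za + zb) := K_alt (K_negK (Kadd ha hb)) _
    _ = -((a + b) + (a + b)) + (za + zb) := by rw [K_neg2 (Kadd ha hb)]
    _ = -((a + a) + (b + b)) + (za + zb) := by rw [(ha b b).symm]
    _ = (-(a + a) + -(b + b)) + (za + zb) := by
        rw [K_neg_add (Kadd ha ha) (Kadd hb hb)]
    _ = (-(a + a) + za) + (-(b + b) + zb) := m2.symm
    _ = (-a + (-a + za)) + (-b + (-b + zb)) := by rw [← e_a, ← e_b]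

lemma hmap_add_K {f : Q → Q} (hf : IsEndo f)
    (hFK : ∀ x : Q, inMoufangCenter (-x + f x)) (hFN : ∀ x : Q, inNucleus (x + f x))
    {a b : Q} (ha : inMoufangCenter a) (hb : inMoufangCenter b) :
    -(a + b) + f (a + b) = (-a + f a) + (-b + f b) := by
  have core := K_endo_core ha hb (hFN a) (hFN b) (Kadd ha (fK hFK ha))
  have efa : f a = -a + (a + f a) := (gilip a (f a)).symm
  have efb : f b = -b + (b + f b) := (gilip b (f b)).symm
  calc -(a + b) + f (a + b) = -(a + b) + (f a + f b) := by rw [hf a b]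
    _ = -(a + b) + ((-a + (a + f a)) + (-b + (b + f b))) := by rw [← efa, ← efb]
    _ = (-a + (-a + (a + f a))) + (-b + (-b + (b + f b))) := core
    _ = (-a + f a) + (-b + f b) := by rw [← efa, ← efb]

lemma rearr {α α' β β' : Q} (hαN : inNucleus α) (hα'N : inNucleus α')
    (hβK : inMoufangCenter β) :
    (α + α') + (β' + β) = (α + β) + (α' + β') := by
  calc (α + α') + (β' + β) = α + (α' + (β' + β)) := N1 hαN _ _
    _ = α + ((α' + β') + β) := by rw [N1 hα'N]
    _ = α + (β + (α' + β')) := by rw [← K_comm hβK (α' + β')]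
    _ = (α + β) + (α' + β') := (N1 hαN _ _).symm

lemma hmap_endo {f : Q → Q} (hf : IsEndo f)
    (hFK : ∀ x : Q, inMoufangCenter (-x + f x)) (hFN : ∀ x : Q, inNucleus (x + f x)) :
    IsEndo (fun x => -x + f x) := by
  intro x y
  show -(x + y) + f (x + y) = (-x + f x) + (-y + f y)
  obtain ⟨u, v, hu, hv, hx1, hx2⟩ := NKLoop.nk_decomp x
  obtain ⟨u', v', hu', hv', hy1, hy2⟩ := NKLoop.nk_decomp y
  have hvv' : inMoufangCenter (v' + v) := Kadd hv' hv
  have huu' : inNucleus (u + u') := Nadd hu hu'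
  have exy1 : x + y = (u + u') + (v' + v) := by
    rw [hx1, hy1]
    calc (u + v) + (u' + v') = u + (v + (u' + v')) := N1 hu _ _
      _ = u + ((u' + v') + v) := by rw [K_comm hv (u' + v')]
      _ = u + (u' + (v' + v)) := by rw [N1 hu']
      _ = (u + u') + (v' + v) := (N1 hu _ _).symm
  have exy2 : x + y = (v' + v) + (u + u') := exy1.trans (K_comm hvv' (u + u')).symm
  have ex : -x + f x = (-u + f u) + (-v + f v) := hmap_decomp hf hFN hu hv hx1 hx2
  have ey : -y + f y = (-u' + f u') + (-v' + f v') := hmap_decomp hf hFN hu' hv' hy1 hy2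
  have main : -(x + y) + f (x + y)
      = ((-u + f u) + (-u' + f u')) + ((-v' + f v') + (-v + f v)) := by
    rw [hmap_decomp hf hFN huu' hvv' exy1 exy2,
      hmap_add_N hf hFK hFN hu hu', hmap_add_K hf hFK hFN hv' hv]
  rw [main, ex, ey]
  exact rearr (Nadd (Nneg hu) (fN hFN hu)) (Nadd (Nneg hu') (fN hFN hu')) (hFK v)

lemma hmap_special {f : Q → Q} (hf : IsEndo f)
    (hFK : ∀ x : Q, inMoufangCenter (-x + f x)) (hFN : ∀ x : Q, inNucleus (x + f x)) :
    IsSpecial (fun x => -x + f x) := by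
  refine ⟨hmap_endo hf hFK hFN, fun x => hFK x, ⟨2, ?_⟩, fun x hx => ?_⟩
  · intro x hx
    show inCenterOfK (zsmulL 2 x + (-x + f x))
    have h2 : zsmulL (2 : ℤ) x = x + x := by
      show x + (x + 0) = x + x
      rw [addz]
    rw [h2, K_lip0 hx (f x)]
    exact ⟨Kadd hx (fK hFK hx), fun p q _ _ => hFN x p q⟩
  · show inNucleus (-x + f x)
    exact Nadd (Nneg hx) (fN hFN hx)

end NKAux

namespace NKAux

variable {Q : Type u} [NKLoop Q]

lemma key_gen {f fi : Q → Q} (hf : IsEndo f) (hfi₂ : Function.RightInverse fi f)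
    (hFK : ∀ x : Q, inMoufangCenter (-x + f x))
    (hFiK : ∀ x : Q, inMoufangCenter (-x + fi x)) (x : Q) :
    f (-x + fi x) = -(-x + f x) := by
  obtain ⟨u, v, hu, hv, h1, h2⟩ := NKLoop.nk_decomp x
  obtain ⟨A, hA⟩ : ∃ A : Q, -x + f x = A := ⟨_, rfl⟩
  obtain ⟨B, hB⟩ : ∃ B : Q, -x + fi x = B := ⟨_, rfl⟩
  obtain ⟨C, hC⟩ : ∃ C : Q, f B = C := ⟨_, rfl⟩
  have haK : inMoufangCenter A := hA ▸ hFK x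
  have hbK : inMoufangCenter B := hB ▸ hFiK x
  rw [hB, hC, hA]
  have e1 : x = (x + A) + C := by
    calc x = f (fi x) := (hfi₂ x).symm
      _ = f (x + B) := congrArg f (by rw [← hB]; exact (glip x (fi x)).symm)
      _ = f x + f B := hf x B
      _ = (x + A) + C := by
          rw [← hC]
          exact congrArg (fun t => t + f B)
            (show f x = x + A by rw [← hA]; exact (glip x (f x)).symm)
  have e2 : v = (v + A) + C := by
    refine lcancel (a := u) ?_
    calc u + v = x := h1.symm
      _ = (x + A) + C := e1
      _ = ((u + v) + A) + C := by rw [h1]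
      _ = (u + (v + A)) + C := by rw [N1 hu]
      _ = u + ((v + A) + C) := N1 hu _ _
  have e3 : (v + v) + (A + (-v + C)) = (v + v) + -v := by
    calc (v + v) + (A + (-v + C)) = (v + A) + (v + (-v + C)) := hv A (-v + C)
      _ = (v + A) + C := by rw [K_lip hv]
      _ = v := e2.symm
      _ = (v + v) + -v := by
          have h := K_lip0 hv 0
          rw [addz, addz] at h
          exact h.symm
  have e4 : A + (-v + C) = -v := lcancel e3
  have e5 : -v + C = -A + -v := lcancel (e4.trans (K_lip haK (-v)).symm)
  have e6 : -v + C = -v + -A := e5.trans (K_comm (K_negK haK) (-v))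
  exact lcancel e6

end NKAux


theorem aut_F_hp {Q : Type u} [NKLoop Q] (f fi : Q → Q)
    (hf : IsEndo f) (hbij : Function.Bijective f)
    (hfi₁ : Function.LeftInverse fi f) (hfi₂ : Function.RightInverse fi f)
    (hF : SatisfiesF f) (hFi : SatisfiesF fi)
    (h p : Q → Q) (hh : ∀ x : Q, h x = -x + f x) (hp : ∀ x : Q, p x = -x + fi x) :
    IsSpecial h ∧ IsSpecial p ∧ h ∘ p = p ∘ h ∧
    ((fun x : Q => (h x + p x) + h (p x)) = (fun _ : Q => (0 : Q))) := by
  classical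
  have hh' : h = fun x => -x + f x := funext hh
  have hp' : p = fun x => -x + fi x := funext hp
  subst hh'; subst hp'
  have hFK : ∀ x : Q, inMoufangCenter (-x + f x) := fun x => (hF x).1
  have hFN : ∀ x : Q, inNucleus (x + f x) := fun x => (hF x).2
  have hFiK : ∀ x : Q, inMoufangCenter (-x + fi x) := fun x => (hFi x).1
  have hFiN : ∀ x : Q, inNucleus (x + fi x) := fun x => (hFi x).2
  have hfi : IsEndo fi := by
    intro x y
    apply hbij.1
    calc f (fi (x + y)) = x + y := hfi₂ _
      _ = f (fi x) + f (fi y) := by rw [hfi₂, hfi₂]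
      _ = f (fi x + fi y) := (hf _ _).symm
  have key1 : ∀ x : Q, f (-x + fi x) = -(-x + f x) :=
    NKAux.key_gen hf hfi₂ hFK hFiK
  have key2 : ∀ x : Q, fi (-x + f x) = -(-x + fi x) :=
    NKAux.key_gen hfi hfi₁ hFiK hFK
  refine ⟨NKAux.hmap_special hf hFK hFN, NKAux.hmap_special hfi hFiK hFiN, ?_, ?_⟩
  · funext x
    show -(-x + fi x) + f (-x + fi x) = -(-x + f x) + fi (-x + f x)
    rw [key1 x, key2 x]
    exact NKAux.K_comm (NKAux.K_negK (hFiK x)) (-(-x + f x))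
  · funext x
    show ((-x + f x) + (-x + fi x)) + (-(-x + fi x) + f (-x + fi x)) = 0
    rw [key1 x]
    calc ((-x + f x) + (-x + fi x)) + (-(-x + fi x) + -(-x + f x))
        = ((-x + f x) + (-x + fi x)) + (-(-x + f x) + -(-x + fi x)) := by
          rw [NKAux.K_comm (NKAux.K_negK (hFiK x)) (-(-x + f x))]
      _ = ((-x + f x) + (-x + fi x)) + -((-x + f x) + (-x + fi x)) := by
          rw [← NKAux.K_neg_add (hFK x) (hFiK x)]
      _ = 0 := NKAux.addneg _
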